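/- Let H be a separable Hilbert space, A a densely defined operator on H such that −A generates an analytic semigroup S(·) with ‖(λ+A)^{1/2} S(t)‖ ≤ C e^{(λ−δ)t} t^{−1/2} for some λ ≥ 0, δ > 0, and suppose ‖A₂^{−σ}‖_{L₂(H)} ≤ C_σ for every σ > d/4 (Hilbert–Schmidt bound) and ‖S(t) A₂^{ρ}‖_{L(H)} ≤ C e^{(λ−δ)t} t^{−ρ} for ρ ∈ [0, 1/2]. Then for γ > d/4 − 1/2 and any α ∈ [0, min(1/2, 1/2 + γ − d/4)), there is C_α > 0 with ∫_{t₁}^{t₂} ‖S(t₂ − s) A₂^{−γ}‖²_{L₂(H)} ds ≤ C_α e^{2λ t₂} (t₂ − t₁)^{2α} for all 0 ≤ t₁ ≤ t₂ ≤ T. -/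
import Mathlib


open MeasureTheory intervalIntegral Real

set_option maxHeartbeats 2000000 in
/-- Square-integrability in time of `‖S(t)A₂^{−γ}‖_{L₂(H)}`.
We abstract the operator-norm data as scalar functions:
`f t = ‖S(t) A₂^{−γ}‖_{L₂(H)}`, `g t = ‖(λ+A)^{1/2} S(t)‖_{L(H)}`,
`opN t ρ = ‖S(t) A₂^{ρ}‖_{L(H)}`, `hs σ = ‖A₂^{−σ}‖_{L₂(H)}`, together with the
factorization inequality `f t ≤ opN t (σ−γ) · hs σ` (from `S(t)A₂^{−γ} =
(S(t)A₂^{σ−γ}) A₂^{−σ}` and submultiplicativity of the Hilbert–Schmidt norm), the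
analytic-semigroup bounds `g t ≤ C e^{(λ−δ)t} t^{−1/2}` and
`opN t ρ ≤ C e^{(λ−δ)t} t^{−ρ}` for `ρ ∈ [0,1/2]`, and the Hilbert–Schmidt bound
`hs σ ≤ C_σ` for every `σ > d/4`. Then for `γ > d/4 − 1/2` and any
`α ∈ [0, min(1/2, 1/2 + γ − d/4))`, there is `C_α > 0` with
`∫_{t₁}^{t₂} ‖S(t₂−s)A₂^{−γ}‖²_{L₂(H)} ds ≤ C_α e^{2λt₂} (t₂−t₁)^{2α}` for all
`0 ≤ t₁ ≤ t₂ ≤ T`. -/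
theorem stmt19 (d γ lam δ T : ℝ) (hlam : 0 ≤ lam) (hδ : 0 < δ) (hT : 0 < T)
    (hγ : d / 4 - 1 / 2 < γ)
    (f g : ℝ → ℝ) (opN : ℝ → ℝ → ℝ) (hs : ℝ → ℝ)
    (hf0 : ∀ t, 0 ≤ f t) (hhs0 : ∀ σ, 0 ≤ hs σ)
    (hfac : ∀ t σ : ℝ, 0 < t → f t ≤ opN t (σ - γ) * hs σ)
    (hg : ∃ C : ℝ, 0 < C ∧ ∀ t : ℝ, 0 < t →
      g t ≤ C * Real.exp ((lam - δ) * t) * t ^ (-(1/2 : ℝ)))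
    (hop : ∃ C : ℝ, 0 < C ∧ ∀ t ρ : ℝ, 0 < t → 0 ≤ ρ → ρ ≤ 1/2 →
      opN t ρ ≤ C * Real.exp ((lam - δ) * t) * t ^ (-ρ))
    (hhs : ∀ σ : ℝ, d / 4 < σ → ∃ C : ℝ, 0 < C ∧ hs σ ≤ C) :
    ∀ α : ℝ, 0 ≤ α → α < min (1/2) (1/2 + γ - d/4) →
      ∃ Cα : ℝ, 0 < Cα ∧ ∀ t₁ t₂ : ℝ, 0 ≤ t₁ → t₁ ≤ t₂ → t₂ ≤ T →
        (∫ s in t₁..t₂, f (t₂ - s) ^ 2) ≤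
          Cα * Real.exp (2 * lam * t₂) * (t₂ - t₁) ^ (2 * α) := by
  clear hg
  intro α hα0 hα
  obtain ⟨C, hC, hopC⟩ := hop
  have hα12 : α < 1/2 := lt_of_lt_of_le hα (min_le_left _ _)
  have hα2 : α < 1/2 + γ - d/4 := lt_of_lt_of_le hα (min_le_right _ _)
  set m : ℝ := max 0 (d/4 - γ) with hmdef
  have hm0 : 0 ≤ m := le_max_left _ _
  have hmdg : d/4 - γ ≤ m := le_max_right _ _
  have hm1 : m < 1/2 - α := by
    rw [hmdef, max_lt_iff]; constructor <;> linarith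
  set ρ : ℝ := (m + (1/2 - α))/2 with hρdef
  have hρ0 : 0 ≤ ρ := by rw [hρdef]; linarith
  have hρm : m < ρ := by rw [hρdef]; linarith
  have hρlt : ρ < 1/2 - α := by rw [hρdef]; linarith
  have hρhalf : ρ ≤ 1/2 := by linarith
  have h2ρ : 2*ρ < 1 := by linarith
  have hσ : d/4 < ρ + γ := by linarith
  obtain ⟨Cσ, hCσ, hhsσ⟩ := hhs (ρ + γ) hσ
  have hexp : 0 < 1 - 2*ρ - 2*α := by linarith
  refine ⟨C^2 * Cσ^2 * T ^ (1 - 2*ρ - 2*α) / (1 - 2*ρ),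
    div_pos (by positivity) (by linarith), ?_⟩
  intro t₁ t₂ ht₁ h12 h2T
  set Δ : ℝ := t₂ - t₁ with hΔdef
  have hΔ0 : 0 ≤ Δ := by rw [hΔdef]; linarith
  have hΔT : Δ ≤ T := by rw [hΔdef]; linarith
  have hΔt₂ : Δ ≤ t₂ := by rw [hΔdef]; linarith
  -- change of variables
  have hcv : (∫ s in t₁..t₂, f (t₂ - s) ^ 2) = ∫ u in (0:ℝ)..Δ, f u ^ 2 := by
    rw [intervalIntegral.integral_comp_sub_left (fun u => f u ^ 2) t₂, sub_self]
  rw [hcv, intervalIntegral.integral_of_le hΔ0]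
  set K : ℝ := C^2 * Cσ^2 * Real.exp (2 * lam * t₂) with hKdef
  have hK0 : 0 < K := by positivity
  -- pointwise bound on Ioc 0 Δ
  have hpt : ∀ u ∈ Set.Ioc (0:ℝ) Δ, f u ^ 2 ≤ K * u ^ (-(2*ρ)) := by
    intro u hu
    have hu0 : 0 < u := hu.1
    have h1 : f u ≤ opN u ρ * hs (ρ + γ) := by
      have := hfac u (ρ + γ) hu0
      simpa using this
    have h2 : opN u ρ ≤ C * Real.exp ((lam - δ) * u) * u ^ (-ρ) :=
      hopC u ρ hu0 hρ0 hρhalf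
    have h3 : f u ≤ (C * Real.exp ((lam - δ) * u) * u ^ (-ρ)) * Cσ := by
      calc f u ≤ opN u ρ * hs (ρ + γ) := h1
        _ ≤ (C * Real.exp ((lam - δ) * u) * u ^ (-ρ)) * Cσ := by
            apply mul_le_mul h2 hhsσ (hhs0 _)
            positivity
    have h4 : f u ^ 2 ≤ ((C * Real.exp ((lam - δ) * u) * u ^ (-ρ)) * Cσ) ^ 2 :=
      pow_le_pow_left₀ (hf0 u) h3 2
    refine h4.trans ?_
    have hrpow2 : (u ^ (-ρ)) ^ 2 = u ^ (-(2*ρ)) := by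
      rw [sq, ← Real.rpow_add hu0]
      congr 1; ring
    have hrw : ((C * Real.exp ((lam - δ) * u) * u ^ (-ρ)) * Cσ) ^ 2
        = C^2 * Cσ^2 * Real.exp ((lam - δ) * u) ^ 2 * u ^ (-(2*ρ)) := by
      rw [mul_pow, mul_pow, mul_pow, hrpow2]; ring
    rw [hrw, hKdef]
    have hut₂ : u ≤ t₂ := le_trans hu.2 hΔt₂
    have h5 : (lam - δ) * u ≤ lam * t₂ := by
      nlinarith [mul_nonneg hδ.le hu0.le, mul_nonneg hlam (sub_nonneg.mpr hut₂)]
    have hexple : Real.exp ((lam - δ) * u) ^ 2 ≤ Real.exp (2 * lam * t₂) := by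
      rw [sq, ← Real.exp_add]
      apply Real.exp_le_exp.mpr
      linarith
    have hu2ρ : (0:ℝ) ≤ u ^ (-(2*ρ)) := Real.rpow_nonneg hu0.le _
    exact mul_le_mul_of_nonneg_right
      (mul_le_mul_of_nonneg_left hexple (by positivity)) hu2ρ
  -- integrability of the dominating function
  have hdom : IntegrableOn (fun u : ℝ => K * u ^ (-(2*ρ))) (Set.Ioc 0 Δ) := by
    have := (intervalIntegral.intervalIntegrable_rpow' (a := 0) (b := Δ)
      (r := -(2*ρ)) (by linarith)).const_mul K
    exact (intervalIntegrable_iff_integrableOn_Ioc_of_le hΔ0).mp this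
  -- value of the dominating integral
  have hval : ∫ u in Set.Ioc (0:ℝ) Δ, K * u ^ (-(2*ρ)) = K * (Δ ^ (1 - 2*ρ) / (1 - 2*ρ)) := by
    rw [← intervalIntegral.integral_of_le hΔ0, intervalIntegral.integral_const_mul,
      integral_rpow (Or.inl (by linarith)),
      Real.zero_rpow (by intro h; rw [show -(2*ρ) + 1 = 1 - 2*ρ from by ring] at h; linarith),
      show -(2*ρ) + 1 = 1 - 2*ρ from by ring, sub_zero]
  -- split into integrable / non-integrable cases
  by_cases hfi : IntegrableOn (fun u : ℝ => f u ^ 2) (Set.Ioc 0 Δ)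
  · have hmono : (∫ u in Set.Ioc (0:ℝ) Δ, f u ^ 2) ≤ ∫ u in Set.Ioc (0:ℝ) Δ, K * u ^ (-(2*ρ)) :=
      setIntegral_mono_on hfi hdom measurableSet_Ioc hpt
    refine hmono.trans ?_
    rw [hval]
    have hsplit : Δ ^ (1 - 2*ρ) ≤ T ^ (1 - 2*ρ - 2*α) * Δ ^ (2*α) := by
      have hΔsplit : Δ ^ (1 - 2*ρ) = Δ ^ (1 - 2*ρ - 2*α) * Δ ^ (2*α) := by
        rw [← Real.rpow_add' hΔ0 (ne_of_gt (by linarith : (0:ℝ) < 1 - 2*ρ - 2*α + 2*α))]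
        congr 1; ring
      rw [hΔsplit]
      exact mul_le_mul_of_nonneg_right (Real.rpow_le_rpow hΔ0 hΔT hexp.le)
        (Real.rpow_nonneg hΔ0 _)
    calc K * (Δ ^ (1 - 2*ρ) / (1 - 2*ρ))
        ≤ K * ((T ^ (1 - 2*ρ - 2*α) * Δ ^ (2*α)) / (1 - 2*ρ)) := by
          apply mul_le_mul_of_nonneg_left _ hK0.le
          apply div_le_div_of_nonneg_right hsplit (by linarith)
      _ = C^2 * Cσ^2 * T ^ (1 - 2*ρ - 2*α) / (1 - 2*ρ) * Real.exp (2 * lam * t₂) * Δ ^ (2*α) := by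
          rw [hKdef]; ring
  · rw [MeasureTheory.integral_undef hfi]
    exact mul_nonneg (mul_nonneg (div_nonneg (by positivity) (by linarith))
      (Real.exp_nonneg _)) (Real.rpow_nonneg hΔ0 _)
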